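/- For every A ∈ H and a ∈ 𝐂 one has δ(e,(A,a)) ≥ d(e,(A,a)) ≥ ‖A‖_H, and moreover δ(e,(A,0)) = d(e,(A,0)) = ‖A‖_H. -/

import Mathlib

/-!
The speed of a path `(w, c)` dominates `‖w'‖`, and `‖w(1) - w(0)‖ ≤ ∫ ‖w'‖`, so every path from
`e` to `(A, a)` has length at least `‖A‖`. On a horizontal path the two speeds agree, hence
`δ ≥ d`. Finally `ω(A, A) = 0` by skew-symmetry, so the segment `s ↦ (s • A, 0)` is a horizontal
path of length `‖A‖`, which forces equality when `a = 0`.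
-/

open MeasureTheory
open scoped ENNReal

/-- The length of the `C¹` path `s ↦ (w s, c s)`, `0 ≤ s ≤ 1`, with respect to the
left invariant Riemannian metric on the Heisenberg type group determined by `ω`. -/
noncomputable def pathLen {H C : Type*} [NormedAddCommGroup H] [InnerProductSpace ℝ H]
    [NormedAddCommGroup C] [InnerProductSpace ℝ C]
    (ω : H →L[ℝ] H →L[ℝ] C) (w : ℝ → H) (c : ℝ → C) : ℝ :=
  ∫ s in (0:ℝ)..1,
    Real.sqrt (‖deriv w s‖ ^ 2 + ‖deriv c s - (2:ℝ)⁻¹ • ω (w s) (deriv w s)‖ ^ 2)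

/-- The left invariant Riemannian distance on `𝔤_CM = H × 𝐂`. -/
noncomputable def dCM {H C : Type*} [NormedAddCommGroup H] [InnerProductSpace ℝ H]
    [NormedAddCommGroup C] [InnerProductSpace ℝ C]
    (ω : H →L[ℝ] H →L[ℝ] C) (x y : H × C) : ℝ :=
  sInf {L : ℝ | ∃ w : ℝ → H, ∃ c : ℝ → C, ContDiff ℝ 1 w ∧ ContDiff ℝ 1 c ∧
    w 0 = x.1 ∧ c 0 = x.2 ∧ w 1 = y.1 ∧ c 1 = y.2 ∧ L = pathLen ω w c}

/-- The horizontal (Carnot–Carathéodory) distance on `𝔤_CM = H × 𝐂`, with value `∞` if no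
horizontal `C¹` path joins `x` to `y`. -/
noncomputable def dCC {H C : Type*} [NormedAddCommGroup H] [InnerProductSpace ℝ H]
    [NormedAddCommGroup C] [InnerProductSpace ℝ C]
    (ω : H →L[ℝ] H →L[ℝ] C) (x y : H × C) : ℝ≥0∞ :=
  ⨅ (w : ℝ → H) (c : ℝ → C) (_ : ContDiff ℝ 1 w) (_ : ContDiff ℝ 1 c)
    (_ : ∀ s ∈ Set.Icc (0:ℝ) 1, deriv c s = (2:ℝ)⁻¹ • ω (w s) (deriv w s))
    (_ : w 0 = x.1) (_ : c 0 = x.2) (_ : w 1 = y.1) (_ : c 1 = y.2),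
    ENNReal.ofReal (∫ s in (0:ℝ)..1, ‖deriv w s‖)

open Set

section HeisenbergLength

variable {H C : Type*} [NormedAddCommGroup H] [InnerProductSpace ℝ H]
    [NormedAddCommGroup C] [InnerProductSpace ℝ C] (ω : H →L[ℝ] H →L[ℝ] C)

theorem pathLen_nonneg (w : ℝ → H) (c : ℝ → C) : 0 ≤ pathLen ω w c :=
  intervalIntegral.integral_nonneg zero_le_one fun _ _ => Real.sqrt_nonneg _

theorem norm_sub_le_pathLen {w : ℝ → H} {c : ℝ → C} (hw : ContDiff ℝ 1 w) (hc : ContDiff ℝ 1 c) :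
    ‖w 1 - w 0‖ ≤ pathLen ω w c := by
  have hw' : Continuous (deriv w) := hw.continuous_deriv le_rfl
  have hc' : Continuous (deriv c) := hc.continuous_deriv le_rfl
  have hspeed : Continuous fun s =>
      √(‖deriv w s‖ ^ 2 + ‖deriv c s - (2:ℝ)⁻¹ • ω (w s) (deriv w s)‖ ^ 2) := by
    have hw_cont := hw.continuous
    fun_prop
  refine norm_sub_le_integral_of_norm_deriv_le_of_le zero_le_one hw.continuous.continuousOn
    (hw.differentiable one_ne_zero).differentiableOn (.of_forall fun s _ => ?_)
    (hspeed.intervalIntegrable 0 1)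
  exact Real.le_sqrt_of_sq_le (le_add_of_nonneg_right (sq_nonneg _))

theorem pathLen_eq_integral_norm_deriv_of_horizontal {w : ℝ → H} {c : ℝ → C}
    (hhor : ∀ s ∈ Icc (0:ℝ) 1, deriv c s = (2:ℝ)⁻¹ • ω (w s) (deriv w s)) :
    pathLen ω w c = ∫ s in (0:ℝ)..1, ‖deriv w s‖ := by
  refine intervalIntegral.integral_congr fun s hs => ?_
  rw [uIcc_of_le zero_le_one] at hs
  simp only [hhor s hs, sub_self, norm_zero]
  simp [Real.sqrt_sq (norm_nonneg _)]

theorem dCM_le_pathLen {x y : H × C} {w : ℝ → H} {c : ℝ → C}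
    (hw : ContDiff ℝ 1 w) (hc : ContDiff ℝ 1 c)
    (hw0 : w 0 = x.1) (hc0 : c 0 = x.2) (hw1 : w 1 = y.1) (hc1 : c 1 = y.2) :
    dCM ω x y ≤ pathLen ω w c :=
  csInf_le ⟨0, by rintro _ ⟨w, c, -, -, -, -, -, -, rfl⟩; exact pathLen_nonneg ω w c⟩
    ⟨w, c, hw, hc, hw0, hc0, hw1, hc1, rfl⟩

theorem norm_sub_le_dCM (x y : H × C) : ‖y.1 - x.1‖ ≤ dCM ω x y := by
  refine le_csInf ⟨_, fun s : ℝ => x.1 + s • (y.1 - x.1), fun s : ℝ => x.2 + s • (y.2 - x.2),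
    by fun_prop, by fun_prop, by simp, by simp, by simp, by simp, rfl⟩ ?_
  rintro _ ⟨w, c, hw, hc, hw0, -, hw1, -, rfl⟩
  simpa only [hw0, hw1] using norm_sub_le_pathLen ω hw hc

theorem ofReal_dCM_le_dCC (x y : H × C) : ENNReal.ofReal (dCM ω x y) ≤ dCC ω x y := by
  simp only [dCC, le_iInf_iff]
  intro w c hw hc hhor hw0 hc0 hw1 hc1
  rw [← pathLen_eq_integral_norm_deriv_of_horizontal ω hhor]
  exact ENNReal.ofReal_le_ofReal (dCM_le_pathLen ω hw hc hw0 hc0 hw1 hc1)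

theorem dCC_le_norm_of_apply_self_eq_zero {A : H} (hA : ω A A = 0) :
    dCC ω (0, 0) (A, 0) ≤ ENNReal.ofReal ‖A‖ := by
  have hderiv : deriv (fun s : ℝ => s • A) = fun _ => A := by
    funext s
    simpa using ((hasDerivAt_id s).smul_const A).deriv
  have hhor : ∀ s ∈ Icc (0:ℝ) 1, deriv (fun _ : ℝ => (0 : C)) s =
      (2:ℝ)⁻¹ • ω (s • A) (deriv (fun s : ℝ => s • A) s) := by
    simp [hderiv, hA]
  refine iInf_le_of_le (fun s : ℝ => s • A) <| iInf_le_of_le (fun _ => 0) <|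
    iInf_le_of_le (by fun_prop) <| iInf_le_of_le contDiff_const <| iInf_le_of_le hhor <|
    iInf_le_of_le (by simp) <| iInf_le_of_le rfl <| iInf_le_of_le (by simp) <|
    iInf_le_of_le rfl ?_
  simp [hderiv]

end HeisenbergLength

theorem horizontal_dist_ge_dist_ge_norm_general
    {H C : Type*} [NormedAddCommGroup H] [InnerProductSpace ℝ H]
    [NormedAddCommGroup C] [InnerProductSpace ℝ C]
    (ω : H →L[ℝ] H →L[ℝ] C)
    (hskew : ∀ A B : H, ω A B = - ω B A) :
    ∀ (A : H) (a : C),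
      ENNReal.ofReal (dCM ω ((0 : H), (0 : C)) (A, a)) ≤ dCC ω ((0 : H), (0 : C)) (A, a) ∧
      ‖A‖ ≤ dCM ω ((0 : H), (0 : C)) (A, a) ∧
      dCC ω ((0 : H), (0 : C)) (A, (0 : C)) = ENNReal.ofReal ‖A‖ ∧
      dCM ω ((0 : H), (0 : C)) (A, (0 : C)) = ‖A‖ := by
  intro A a
  have hnorm (b : C) : ‖A‖ ≤ dCM ω (0, 0) (A, b) := by
    simpa using norm_sub_le_dCM ω (0, 0) (A, b)
  have hAA : ω A A = 0 := by
    have h := hskew A A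
    rwa [eq_neg_iff_add_eq_zero, ← two_smul ℝ, smul_eq_zero, or_iff_right two_ne_zero] at h
  have hdCC : dCC ω (0, 0) (A, 0) = ENNReal.ofReal ‖A‖ :=
    le_antisymm (dCC_le_norm_of_apply_self_eq_zero ω hAA)
      ((ENNReal.ofReal_le_ofReal (hnorm 0)).trans (ofReal_dCM_le_dCC ω _ _))
  refine ⟨ofReal_dCM_le_dCC ω _ _, hnorm a, hdCC, le_antisymm ?_ (hnorm 0)⟩
  rw [← ENNReal.ofReal_le_ofReal_iff (norm_nonneg A), ← hdCC]
  exact ofReal_dCM_le_dCC ω _ _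

/-- `δ(e,(A,a)) ≥ d(e,(A,a)) ≥ ‖A‖_H`, and `δ(e,(A,0)) = d(e,(A,0)) = ‖A‖_H`. -/
theorem horizontal_dist_ge_dist_ge_norm
    {H C : Type*} [NormedAddCommGroup H] [InnerProductSpace ℝ H]
    [TopologicalSpace.SeparableSpace H]
    [NormedAddCommGroup C] [InnerProductSpace ℝ C] [FiniteDimensional ℝ C]
    (ω : H →L[ℝ] H →L[ℝ] C)
    (hskew : ∀ A B : H, ω A B = - ω B A) :
    ∀ (A : H) (a : C),
      ENNReal.ofReal (dCM ω ((0 : H), (0 : C)) (A, a)) ≤ dCC ω ((0 : H), (0 : C)) (A, a) ∧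
      ‖A‖ ≤ dCM ω ((0 : H), (0 : C)) (A, a) ∧
      dCC ω ((0 : H), (0 : C)) (A, (0 : C)) = ENNReal.ofReal ‖A‖ ∧
      dCM ω ((0 : H), (0 : C)) (A, (0 : C)) = ‖A‖ :=
  horizontal_dist_ge_dist_ge_norm_general ω hskew
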